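/- Let O be an ordering of a weighted brick complex with level surfaces S_j, and suppose A = O⁻¹(i) and B = O⁻¹(i+1) are both shortening moves for S_i that share no facets (∂A ⊓ ∂B = ∅). Then the ordering O' = τ_i ∘ O obtained by swapping them satisfies Ω(O') ≤ Ω(O). -/

import Mathlib

open Finset

/-- The total weight of a set of facets. -/
def wt {Facet : Type} [DecidableEq Facet] (ω : Facet → ℝ) (S : Finset Facet) : ℝ :=
  ∑ f ∈ S, ω f

/-- The strength σ(A;S) of a brick with set of interior facets `intA`
relative to a surface `S`:  ω(∂'_S A) − ω(∂_S A). -/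
def strength {Facet : Type} [DecidableEq Facet] (ω : Facet → ℝ) (intA S : Finset Facet) : ℝ :=
  wt ω (intA \ S) - wt ω (intA ∩ S)

/-- A surface (set of facets) is proper if none of its facets lies in ∂M and every
(n−2)-face not in ∂M is contained in an even number of its facets. -/
def ProperSurf {Facet Face : Type} [DecidableEq Facet] [DecidableEq Face]
    (bdF : Finset Facet) (facesOf : Facet → Finset Face) (bdE : Finset Face)
    (S : Finset Facet) : Prop :=
  (∀ f ∈ S, f ∉ bdF) ∧
  ∀ e : Face, e ∉ bdE → Even ((S.filter (fun f => e ∈ facesOf f)).card)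

/-- The interior facets ∂_I A of a brick `A`: facets incident to exactly two bricks,
one of which is `A`. -/
def intFacets {Brick Facet : Type} [DecidableEq Brick] [Fintype Facet] [DecidableEq Facet]
    (bricksOf : Facet → Finset Brick) (A : Brick) : Finset Facet :=
  univ.filter (fun f => A ∈ bricksOf f ∧ (bricksOf f).card = 2)

/-- The facets shared by two bricks `A` and `B` (∂A ⊓ ∂B). -/
def commonFacets {Brick Facet : Type} [DecidableEq Brick] [Fintype Facet] [DecidableEq Facet]
    (bricksOf : Facet → Finset Brick) (A B : Brick) : Finset Facet :=
  univ.filter (fun f => A ∈ bricksOf f ∧ B ∈ bricksOf f)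

/-- `A` is a shortening move for `S` (given interior facets `intA` of `A`):
it meets `S` and σ(A;S) ≤ 0. -/
def ShortMove {Facet : Type} [DecidableEq Facet] (ω : Facet → ℝ) (intA S : Finset Facet) : Prop :=
  (intA ∩ S).Nonempty ∧ strength ω intA S ≤ 0

/-- `A` is a strict shortening move for `S`: it meets `S` and σ(A;S) < 0. -/
def StrictShort {Facet : Type} [DecidableEq Facet] (ω : Facet → ℝ) (intA S : Finset Facet) : Prop :=
  (intA ∩ S).Nonempty ∧ strength ω intA S < 0

/-- The sublevel set M_j of an ordering: the bricks at heights 1,…,j. -/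
def sublevel {Brick : Type} [Fintype Brick] [DecidableEq Brick] {N : ℕ}
    (O : Fin N ≃ Brick) (j : ℕ) : Finset Brick :=
  univ.filter (fun T => ((O.symm T : Fin N) : ℕ) + 1 ≤ j)

/-- The level surface S_j at height j: facets shared between a brick of M_j and a
brick not in M_j. -/
def levelSurf {Brick Facet : Type} [Fintype Brick] [DecidableEq Brick]
    [Fintype Facet] [DecidableEq Facet]
    (bricksOf : Facet → Finset Brick) {N : ℕ} (O : Fin N ≃ Brick) (j : ℕ) : Finset Facet :=
  univ.filter (fun f => (∃ T ∈ bricksOf f, T ∈ sublevel O j) ∧ ∃ T ∈ bricksOf f, T ∉ sublevel O j)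

/-- Λ(j): the weight of the level surface at height j. -/
def Lam {Brick Facet : Type} [Fintype Brick] [DecidableEq Brick]
    [Fintype Facet] [DecidableEq Facet] (ω : Facet → ℝ)
    (bricksOf : Facet → Finset Brick) {N : ℕ} (O : Fin N ≃ Brick) (j : ℕ) : ℝ :=
  wt ω (levelSurf bricksOf O j)

/-- `t` is a (local) maximum of the ordering with level-weight function Λ. -/
def IsMaxAt (N : ℕ) (Λ : ℕ → ℝ) (t : ℕ) : Prop :=
  ∃ tm tp : ℕ, tm < t ∧ t < tp ∧ tp ≤ N ∧
    Λ tm < Λ (tm + 1) ∧ Λ tp < Λ (tp - 1) ∧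
    ∀ k, tm < k → k < tp → Λ k = Λ t

open Classical in
/-- The width Ω of an ordering: the values of Λ at its maxima, arranged in
non-increasing order. -/
noncomputable def widthList (N : ℕ) (Λ : ℕ → ℝ) : List ℝ :=
  ((((Finset.range (N + 1)).filter (fun t => IsMaxAt N Λ t)).val.map Λ).sort (· ≤ ·)).reverse

/-- Strict lexicographic comparison of widths. -/
def WidthLT (l₁ l₂ : List ℝ) : Prop := List.Lex (· < ·) l₁ l₂

/-- Lexicographic comparison of widths. -/
def WidthLE (l₁ l₂ : List ℝ) : Prop := WidthLT l₁ l₂ ∨ l₁ = l₂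

/-! Let a, b, c be the weights of the level surfaces at heights i, i+1, i+2 of `O`, and b' the
weight at height i+1 of `O'`; all other level surfaces agree. Adding a brick changes the level
surface by its interior facets (S_{j+1} = S_j ∆ ∂_I(O j)), so b = a + σ(A;S_i), b' = a + σ(B;S_i) and,
as A and B share no facet, c = b + σ(B;S_i). The shortening hypotheses give σ(A;S_i) ≥ 0 ≥ σ(B;S_i),
hence b' ≤ a ≤ b and b + b' = a + c: the swap lowers the profile at a single height.

If b' = b nothing changes. If i+1 is not a maximum of the profile of `O`, both profiles have the same
maxima with the same values. If it is, every maximum of the new profile of height ≥ b is a maximum of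
the old one other than i+1, so the part of the width at heights ≥ b loses an entry, which makes the new
width lexicographically smaller. -/

section SortedLex

variable {α : Type*} [LinearOrder α]

theorem Multiset.filter_filter_of_le {M : Multiset α} {v b : α} (h : v ≤ b) :
    (M.filter (v ≤ ·)).filter (b ≤ ·) = M.filter (b ≤ ·) := by
  rw [Multiset.filter_filter]
  exact Multiset.filter_congr fun x _ => ⟨fun hx => hx.1, fun hx => ⟨hx, h.trans hx⟩⟩

theorem exists_filter_lt_of_lex {L L' : List α} (hL : L.Pairwise (· ≥ ·))
    (h : List.Lex (· < ·) L L') :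
    ∃ v, (L : Multiset α).filter (v ≤ ·) < (L' : Multiset α).filter (v ≤ ·) := by
  have head_pos : ∀ b (m : List α), 0 < ((b :: m : List α) : Multiset α).filter (b ≤ ·) :=
    fun b m => by
      rw [← Multiset.cons_coe, Multiset.filter_cons_of_pos _ le_rfl]
      exact pos_iff_ne_zero.2 Multiset.cons_ne_zero
  induction h with
  | @nil b m => exact ⟨b, by simpa using head_pos b m⟩
  | @cons a l m _ ih =>
    obtain ⟨v, hv⟩ := ih hL.of_cons
    refine ⟨v, ?_⟩
    rw [← Multiset.cons_coe, ← Multiset.cons_coe]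
    by_cases hva : v ≤ a
    · rw [Multiset.filter_cons_of_pos _ hva, Multiset.filter_cons_of_pos _ hva]
      exact Multiset.cons_lt_cons a hv
    · rwa [Multiset.filter_cons_of_neg _ hva, Multiset.filter_cons_of_neg _ hva]
  | @rel a l b m hab =>
    refine ⟨b, ?_⟩
    have hsmall : ((a :: l : List α) : Multiset α).filter (b ≤ ·) = 0 := by
      refine Multiset.filter_eq_nil.2 fun x hx => not_le.2 (lt_of_le_of_lt ?_ hab)
      rcases List.mem_cons.1 (Multiset.mem_coe.1 hx) with rfl | hx
      exacts [le_rfl, List.rel_of_pairwise_cons hL hx]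
    rw [hsmall]
    exact head_pos b m

theorem lex_of_filter_lt {L L' : List α} (hL : L.Pairwise (· ≥ ·)) {b : α}
    (h : (L' : Multiset α).filter (b ≤ ·) < (L : Multiset α).filter (b ≤ ·)) :
    List.Lex (· < ·) L' L := by
  rcases trichotomous_of (List.Lex (· < ·)) L' L with hlt | rfl | hgt
  · exact hlt
  · exact absurd h (lt_irrefl _)
  · obtain ⟨v, hv⟩ := exists_filter_lt_of_lex hL hgt
    rcases le_total v b with hvb | hbv
    · have := Multiset.filter_le_filter (b ≤ ·) hv.le
      rw [Multiset.filter_filter_of_le hvb, Multiset.filter_filter_of_le hvb] at this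
      exact (h.trans_le this).false.elim
    · have := Multiset.filter_le_filter (v ≤ ·) h.le
      rw [Multiset.filter_filter_of_le hbv, Multiset.filter_filter_of_le hbv] at this
      exact (hv.trans_le this).false.elim

end SortedLex

theorem Finset.filter_map_val {α β : Type*} (Q : Finset α) (f : α → β) (p : β → Prop)
    [DecidablePred p] : (Q.val.map f).filter p = (Q.filter (fun t => p (f t))).val.map f := by
  rw [Multiset.filter_map, Finset.filter_val]
  rfl

open Classical in
noncomputable def peaks (N : ℕ) (Λ : ℕ → ℝ) : Finset ℕ :=
  (range (N + 1)).filter (fun t => IsMaxAt N Λ t)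

theorem widthList_eq_sort_peaks (N : ℕ) (Λ : ℕ → ℝ) :
    widthList N Λ = (((peaks N Λ).val.map Λ).sort (· ≤ ·)).reverse := rfl

theorem mem_peaks {N : ℕ} {Λ : ℕ → ℝ} {t : ℕ} : t ∈ peaks N Λ ↔ IsMaxAt N Λ t := by
  classical
  simp only [peaks, mem_filter, mem_range, and_iff_right_iff_imp]
  rintro ⟨_, _, _, _, _, _⟩
  omega

theorem widthList_pairwise (N : ℕ) (Λ : ℕ → ℝ) : (widthList N Λ).Pairwise (· ≥ ·) := by
  rw [widthList_eq_sort_peaks, List.pairwise_reverse]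
  exact Multiset.pairwise_sort _ _

theorem widthLT_of_filter_lt {N : ℕ} {Λ Λ' : ℕ → ℝ} {b : ℝ}
    (h : ((peaks N Λ').val.map Λ').filter (b ≤ ·) < ((peaks N Λ).val.map Λ).filter (b ≤ ·)) :
    WidthLT (widthList N Λ') (widthList N Λ) := by
  refine lex_of_filter_lt (widthList_pairwise N Λ) (b := b) ?_
  simpa only [widthList_eq_sort_peaks, Multiset.coe_reverse, Multiset.sort_eq] using h

structure IsPeakPlateau (N : ℕ) (Λ : ℕ → ℝ) (t tm tp : ℕ) : Prop where
  left_lt : tm < t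
  lt_right : t < tp
  right_le : tp ≤ N
  eq_of_mem : ∀ k, tm < k → k < tp → Λ k = Λ t
  left_lt_val : Λ tm < Λ t
  right_lt_val : Λ tp < Λ t

namespace IsPeakPlateau

variable {N : ℕ} {Λ Λ' : ℕ → ℝ} {t tm tp : ℕ}

theorem val_le (hw : IsPeakPlateau N Λ t tm tp) {k : ℕ} (hk : tm ≤ k) (hk' : k ≤ tp) :
    Λ k ≤ Λ t := by
  rcases hk.lt_or_eq with hk | rfl
  · rcases hk'.lt_or_eq with hk' | rfl
    exacts [(hw.eq_of_mem k hk hk').le, hw.right_lt_val.le]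
  · exact hw.left_lt_val.le

theorem of_mem (hw : IsPeakPlateau N Λ t tm tp) {k : ℕ} (hk : tm < k) (hk' : k < tp) :
    IsPeakPlateau N Λ k tm tp := by
  have hv := hw.eq_of_mem k hk hk'
  exact ⟨hk, hk', hw.right_le, fun l hl hl' => (hw.eq_of_mem l hl hl').trans hv.symm,
    hv ▸ hw.left_lt_val, hv ▸ hw.right_lt_val⟩

theorem congr (hw : IsPeakPlateau N Λ' t tm tp) (h : ∀ k, tm ≤ k → k ≤ tp → Λ' k = Λ k) :
    IsPeakPlateau N Λ t tm tp := by
  have ht := h t hw.left_lt.le hw.lt_right.le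
  refine ⟨hw.left_lt, hw.lt_right, hw.right_le, fun k hk hk' => ?_, ?_, ?_⟩
  · rw [← ht, ← h k hk.le hk'.le]; exact hw.eq_of_mem k hk hk'
  · rw [← ht, ← h tm le_rfl (hw.left_lt.trans hw.lt_right).le]; exact hw.left_lt_val
  · rw [← ht, ← h tp (hw.left_lt.trans hw.lt_right).le le_rfl]; exact hw.right_lt_val

end IsPeakPlateau

theorem isMaxAt_iff_exists_isPeakPlateau {N : ℕ} {Λ : ℕ → ℝ} {t : ℕ} :
    IsMaxAt N Λ t ↔ ∃ tm tp, IsPeakPlateau N Λ t tm tp := by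
  constructor
  · rintro ⟨tm, tp, h1, h2, h3, h4, h5, h6⟩
    rw [h6 (tm + 1) (by omega) (by omega)] at h4
    rw [h6 (tp - 1) (by omega) (by omega)] at h5
    exact ⟨tm, tp, h1, h2, h3, h6, h4, h5⟩
  · rintro ⟨tm, tp, h1, h2, h3, h6, h4, h5⟩
    refine ⟨tm, tp, h1, h2, h3, ?_, ?_, h6⟩
    · rwa [h6 (tm + 1) (by omega) (by omega)]
    · rwa [h6 (tp - 1) (by omega) (by omega)]

theorem isMaxAt_succ_of_lt_of_lt {N j : ℕ} {Λ : ℕ → ℝ} (hN : j + 2 ≤ N)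
    (hl : Λ j < Λ (j + 1)) (hr : Λ (j + 2) < Λ (j + 1)) : IsMaxAt N Λ (j + 1) :=
  isMaxAt_iff_exists_isPeakPlateau.2 ⟨j, j + 2, by omega, by omega, hN,
    fun k hk hk' => by rw [show k = j + 1 by omega], hl, hr⟩

structure IsSwapProfile (N j : ℕ) (Λ Λ' : ℕ → ℝ) : Prop where
  le_N : j + 2 ≤ N
  eq_of_ne : ∀ k, k ≠ j + 1 → Λ' k = Λ k
  swap_le : Λ' (j + 1) ≤ Λ j
  le_succ : Λ j ≤ Λ (j + 1)
  add_eq : Λ (j + 1) + Λ' (j + 1) = Λ j + Λ (j + 2)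

namespace IsSwapProfile

variable {N j : ℕ} {Λ Λ' : ℕ → ℝ} (h : IsSwapProfile N j Λ Λ')
include h

theorem succ_succ_le : Λ (j + 2) ≤ Λ (j + 1) := by
  linarith [h.add_eq, h.swap_le]

theorem swap_le_succ_succ : Λ' (j + 1) ≤ Λ (j + 2) := by
  linarith [h.add_eq, h.le_succ]

theorem eq_of_not_lt (hlt : ¬ Λ' (j + 1) < Λ (j + 1)) : Λ' = Λ := by
  funext k
  rcases eq_or_ne k (j + 1) with rfl | hk
  · linarith [h.swap_le, h.le_succ]
  · exact h.eq_of_ne k hk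

theorem not_mem_plateau (hlt : Λ' (j + 1) < Λ (j + 1)) {t tm tp : ℕ}
    (hw : IsPeakPlateau N Λ' t tm tp) (hm : tm < j + 1) (hp : j + 1 < tp) : False := by
  have hv := hw.eq_of_mem (j + 1) hm hp
  have hl := hw.val_le (k := j) (by omega) (by omega)
  have hr := hw.val_le (k := j + 2) (by omega) (by omega)
  rw [h.eq_of_ne j (by omega)] at hl
  rw [h.eq_of_ne (j + 2) (by omega)] at hr
  linarith [h.add_eq]

theorem not_isMaxAt (hlt : Λ' (j + 1) < Λ (j + 1)) : ¬ IsMaxAt N Λ' (j + 1) := by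
  rintro hm
  obtain ⟨tm, tp, hw⟩ := isMaxAt_iff_exists_isPeakPlateau.1 hm
  exact h.not_mem_plateau hlt hw hw.left_lt hw.lt_right

theorem isMaxAt_of_isPeakPlateau_swap_right {t tm : ℕ}
    (hw : IsPeakPlateau N Λ' t tm (j + 1)) (hpeak : IsMaxAt N Λ (j + 1) → Λ (j + 1) ≤ Λ' t) :
    IsMaxAt N Λ t := by
  have htm := hw.left_lt
  have htp := hw.lt_right
  have ht : Λ' t = Λ t := h.eq_of_ne t (by omega)
  have hv : Λ' t = Λ j := (hw.eq_of_mem j (by omega) (by omega)).symm.trans (h.eq_of_ne j (by omega))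
  have hlow := hw.right_lt_val
  have hsum := h.add_eq
  by_cases hflat : Λ (j + 1) = Λ j
  · refine isMaxAt_iff_exists_isPeakPlateau.2
      ⟨tm, j + 2, htm, by omega, h.le_N, fun k hk hk' => ?_, ?_, by linarith⟩
    · rcases eq_or_ne k (j + 1) with rfl | hk1
      · linarith
      · rw [← ht, ← h.eq_of_ne k hk1]; exact hw.eq_of_mem k hk (by omega)
    · rw [← ht, ← h.eq_of_ne tm (by omega)]; exact hw.left_lt_val
  · have hl : Λ j < Λ (j + 1) := lt_of_le_of_ne h.le_succ (Ne.symm hflat)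
    linarith [hpeak (isMaxAt_succ_of_lt_of_lt h.le_N hl (by linarith))]

theorem isMaxAt_of_isPeakPlateau_swap_left {t tp : ℕ}
    (hw : IsPeakPlateau N Λ' t (j + 1) tp) (hpeak : IsMaxAt N Λ (j + 1) → Λ (j + 1) ≤ Λ' t) :
    IsMaxAt N Λ t := by
  have htm := hw.left_lt
  have htp := hw.lt_right
  have ht : Λ' t = Λ t := h.eq_of_ne t (by omega)
  have hv : Λ' t = Λ (j + 2) :=
    (hw.eq_of_mem (j + 2) (by omega) (by omega)).symm.trans (h.eq_of_ne (j + 2) (by omega))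
  have hlow := hw.left_lt_val
  have hsum := h.add_eq
  by_cases hflat : Λ (j + 1) = Λ (j + 2)
  · refine isMaxAt_iff_exists_isPeakPlateau.2
      ⟨j, tp, by omega, htp, hw.right_le, fun k hk hk' => ?_, by linarith, ?_⟩
    · rcases eq_or_ne k (j + 1) with rfl | hk1
      · linarith
      · rw [← ht, ← h.eq_of_ne k hk1]; exact hw.eq_of_mem k (by omega) hk'
    · rw [← ht, ← h.eq_of_ne tp (by omega)]; exact hw.right_lt_val
  · have hr : Λ (j + 2) < Λ (j + 1) := lt_of_le_of_ne h.succ_succ_le (Ne.symm hflat)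
    linarith [hpeak (isMaxAt_succ_of_lt_of_lt h.le_N (by linarith) hr)]

/-- The only maxima of `Λ'` that are not maxima of `Λ` lie next to a strict peak of `Λ` at `j + 1`,
and below it. -/
theorem isMaxAt_of_isMaxAt_swap (hlt : Λ' (j + 1) < Λ (j + 1)) {t : ℕ} (hm : IsMaxAt N Λ' t)
    (hpeak : IsMaxAt N Λ (j + 1) → Λ (j + 1) ≤ Λ' t) : IsMaxAt N Λ t := by
  obtain ⟨tm, tp, hw⟩ := isMaxAt_iff_exists_isPeakPlateau.1 hm
  rcases lt_trichotomy tm (j + 1) with hm' | rfl | hm'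
  · rcases lt_trichotomy (j + 1) tp with hp' | rfl | hp'
    · exact (h.not_mem_plateau hlt hw hm' hp').elim
    · exact h.isMaxAt_of_isPeakPlateau_swap_right hw hpeak
    · exact isMaxAt_iff_exists_isPeakPlateau.2
        ⟨tm, tp, hw.congr fun k _ _ => h.eq_of_ne k (by omega)⟩
  · exact h.isMaxAt_of_isPeakPlateau_swap_left hw hpeak
  · exact isMaxAt_iff_exists_isPeakPlateau.2 ⟨tm, tp, hw.congr fun k _ _ => h.eq_of_ne k (by omega)⟩

theorem isMaxAt_swap_of_isMaxAt (hpeak : ¬ IsMaxAt N Λ (j + 1)) {t : ℕ} (hm : IsMaxAt N Λ t) :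
    IsMaxAt N Λ' t := by
  obtain ⟨tm, tp, hw⟩ := isMaxAt_iff_exists_isPeakPlateau.1 hm
  have htm := hw.left_lt
  have htp := hw.lt_right
  rcases lt_trichotomy tm (j + 1) with hm' | rfl | hm'
  · rcases lt_trichotomy (j + 1) tp with hp' | rfl | hp'
    · exact (hpeak (isMaxAt_iff_exists_isPeakPlateau.2 ⟨tm, tp, hw.of_mem hm' hp'⟩)).elim
    · have := hw.eq_of_mem j (by omega) (by omega)
      linarith [hw.right_lt_val, h.le_succ]
    · exact isMaxAt_iff_exists_isPeakPlateau.2 ⟨tm, tp, hw.congr fun k _ _ => (h.eq_of_ne k (by omega)).symm⟩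
  · have := hw.eq_of_mem (j + 2) (by omega) (by omega)
    linarith [hw.left_lt_val, h.succ_succ_le]
  · exact isMaxAt_iff_exists_isPeakPlateau.2 ⟨tm, tp, hw.congr fun k _ _ => (h.eq_of_ne k (by omega)).symm⟩

theorem widthLT_of_isMaxAt (hlt : Λ' (j + 1) < Λ (j + 1)) (hpeak : IsMaxAt N Λ (j + 1)) :
    WidthLT (widthList N Λ') (widthList N Λ) := by
  classical
  refine widthLT_of_filter_lt (b := Λ (j + 1)) ?_
  set P' := (peaks N Λ').filter (fun t => Λ (j + 1) ≤ Λ' t)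
  set P := (peaks N Λ).filter (fun t => Λ (j + 1) ≤ Λ t)
  have hne : ∀ t ∈ P', t ≠ j + 1 := fun t ht ht' => by
    rw [mem_filter, ht'] at ht; linarith [ht.2]
  have hsub : P' ⊂ P := by
    refine Finset.ssubset_iff_subset_ne.2 ⟨fun t ht => ?_, fun hP => ?_⟩
    · obtain ⟨htm, hv⟩ := mem_filter.1 ht
      rw [mem_peaks] at htm
      refine mem_filter.2 ⟨mem_peaks.2 (h.isMaxAt_of_isMaxAt_swap hlt htm fun _ => hv), ?_⟩
      rwa [← h.eq_of_ne t (hne t ht)]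
    · have : j + 1 ∈ P := mem_filter.2 ⟨mem_peaks.2 hpeak, le_rfl⟩
      exact hne _ (hP ▸ this) rfl
  rw [Finset.filter_map_val, Finset.filter_map_val]
  calc (P'.val.map Λ') = P'.val.map Λ := Multiset.map_congr rfl fun t ht => h.eq_of_ne t (hne t ht)
    _ < P.val.map Λ := Multiset.map_lt_map (Finset.val_lt_iff.2 hsub)

theorem widthList_eq_of_not_isMaxAt (hlt : Λ' (j + 1) < Λ (j + 1))
    (hpeak : ¬ IsMaxAt N Λ (j + 1)) : widthList N Λ' = widthList N Λ := by
  have hpeaks : peaks N Λ' = peaks N Λ := by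
    ext t
    simp only [mem_peaks]
    exact ⟨fun hm => h.isMaxAt_of_isMaxAt_swap hlt hm fun hp => (hpeak hp).elim,
      h.isMaxAt_swap_of_isMaxAt hpeak⟩
  have hval : (peaks N Λ).val.map Λ' = (peaks N Λ).val.map Λ :=
    Multiset.map_congr rfl fun t ht => h.eq_of_ne t fun ht' =>
      hpeak (ht' ▸ mem_peaks.1 ht)
  rw [widthList_eq_sort_peaks, widthList_eq_sort_peaks, hpeaks, hval]

theorem widthLE : WidthLE (widthList N Λ') (widthList N Λ) := by
  by_cases hlt : Λ' (j + 1) < Λ (j + 1)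
  · by_cases hpeak : IsMaxAt N Λ (j + 1)
    · exact Or.inl (h.widthLT_of_isMaxAt hlt hpeak)
    · exact Or.inr (h.widthList_eq_of_not_isMaxAt hlt hpeak)
  · rw [h.eq_of_not_lt hlt]
    exact Or.inr rfl

end IsSwapProfile

open scoped symmDiff

section Weights

variable {Facet : Type} [DecidableEq Facet] (ω : Facet → ℝ)

theorem wt_symmDiff (S I : Finset Facet) : wt ω (S ∆ I) = wt ω S + strength ω I S := by
  simp only [strength, wt]
  rw [symmDiff_def, sup_eq_union, sum_union disjoint_sdiff_sdiff, ← sum_inter_add_sum_sdiff S I,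
    inter_comm]
  ring

theorem strength_symmDiff_self (A S : Finset Facet) : strength ω A (S ∆ A) = -strength ω A S := by
  have h1 : A ∩ (S ∆ A) = A \ S := by ext; simp only [mem_inter, mem_symmDiff, mem_sdiff]; tauto
  have h2 : A \ (S ∆ A) = A ∩ S := by ext; simp only [mem_inter, mem_symmDiff, mem_sdiff]; tauto
  rw [strength, strength, h1, h2]
  ring

theorem strength_symmDiff_of_disjoint {A B : Finset Facet} (h : Disjoint A B) (S : Finset Facet) :
    strength ω B (S ∆ A) = strength ω B S := by
  have hB : ∀ x ∈ B, x ∉ A := fun x hx hxA => disjoint_left.1 h hxA hx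
  have h1 : B ∩ (S ∆ A) = B ∩ S := by
    ext x; have := hB x; simp only [mem_inter, mem_symmDiff]; tauto
  have h2 : B \ (S ∆ A) = B \ S := by
    ext x; have := hB x; simp only [mem_sdiff, mem_symmDiff]; tauto
  rw [strength, strength, h1, h2]

end Weights

section Orderings

variable {Brick Facet : Type} [Fintype Brick] [DecidableEq Brick] [Fintype Facet] [DecidableEq Facet]
  {N : ℕ}

theorem mem_sublevel {O : Fin N ≃ Brick} {j : ℕ} {T : Brick} :
    T ∈ sublevel O j ↔ (O.symm T : ℕ) + 1 ≤ j := by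
  simp [sublevel]

theorem mem_sublevel_succ {O : Fin N ≃ Brick} {k : Fin N} {T : Brick} :
    T ∈ sublevel O (k + 1) ↔ T = O k ∨ T ∈ sublevel O k := by
  rw [mem_sublevel, mem_sublevel, ← Equiv.symm_apply_eq, Fin.ext_iff]
  omega

theorem levelSurf_succ (bricksOf : Facet → Finset Brick)
    (hBC : ∀ f, (bricksOf f).card = 1 ∨ (bricksOf f).card = 2) (O : Fin N ≃ Brick) (k : Fin N) :
    levelSurf bricksOf O (k + 1) = levelSurf bricksOf O k ∆ intFacets bricksOf (O k) := by
  -- A facet with bricks X ≠ Y lies on a level surface iff exactly one of X, Y is below it, and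
  -- adding the brick `O k` flips this exactly when `O k ∈ {X, Y}`.
  have hk : O k ∉ sublevel O k := by simp [mem_sublevel]
  ext f
  simp only [mem_symmDiff, levelSurf, intFacets, mem_filter, mem_univ, true_and, mem_sublevel_succ]
  rcases hBC f with h | h
  · obtain ⟨X, hX⟩ := card_eq_one.1 h
    simp only [hX, mem_singleton, exists_eq_left, card_singleton]
    by_cases hXk : X = O k <;> simp_all
  · obtain ⟨X, Y, hXY, hXY'⟩ := card_eq_two.1 h
    simp only [hXY', mem_insert, mem_singleton, exists_eq_or_imp, exists_eq_left]
    by_cases hXk : X = O k <;> by_cases hYk : Y = O k <;> simp_all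
    tauto

theorem Lam_succ (ω : Facet → ℝ) (bricksOf : Facet → Finset Brick)
    (hBC : ∀ f, (bricksOf f).card = 1 ∨ (bricksOf f).card = 2) (O : Fin N ≃ Brick) (k : Fin N) :
    Lam ω bricksOf O (k + 1)
      = Lam ω bricksOf O k + strength ω (intFacets bricksOf (O k)) (levelSurf bricksOf O k) := by
  rw [Lam, Lam, levelSurf_succ bricksOf hBC, wt_symmDiff]

theorem sublevel_swap_trans (O : Fin N ≃ Brick) (i : Fin N) (hi : (i : ℕ) + 1 < N) {j : ℕ}
    (hj : j ≠ i + 1) : sublevel ((Equiv.swap i ⟨i + 1, hi⟩).trans O) j = sublevel O j := by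
  ext T
  simp only [mem_sublevel, Equiv.symm_trans_apply, Equiv.symm_swap]
  rcases eq_or_ne (O.symm T) i with hx | hx
  · rw [hx, Equiv.swap_apply_left]; dsimp only; omega
  · rcases eq_or_ne (O.symm T) ⟨i + 1, hi⟩ with hx' | hx'
    · rw [hx', Equiv.swap_apply_right]; dsimp only; omega
    · rw [Equiv.swap_apply_of_ne_of_ne hx hx']

theorem levelSurf_swap_trans (bricksOf : Facet → Finset Brick) (O : Fin N ≃ Brick) (i : Fin N)
    (hi : (i : ℕ) + 1 < N) {j : ℕ} (hj : j ≠ i + 1) :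
    levelSurf bricksOf ((Equiv.swap i ⟨i + 1, hi⟩).trans O) j = levelSurf bricksOf O j := by
  simp only [levelSurf, sublevel_swap_trans O i hi hj]

theorem Lam_swap_trans (ω : Facet → ℝ) (bricksOf : Facet → Finset Brick) (O : Fin N ≃ Brick)
    (i : Fin N) (hi : (i : ℕ) + 1 < N) {j : ℕ} (hj : j ≠ i + 1) :
    Lam ω bricksOf ((Equiv.swap i ⟨i + 1, hi⟩).trans O) j = Lam ω bricksOf O j := by
  rw [Lam, Lam, levelSurf_swap_trans bricksOf O i hi hj]

end Orderings

theorem disjoint_intFacets {Brick Facet : Type} [DecidableEq Brick] [Fintype Facet]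
    [DecidableEq Facet] {bricksOf : Facet → Finset Brick} {A B : Brick}
    (h : commonFacets bricksOf A B = ∅) : Disjoint (intFacets bricksOf A) (intFacets bricksOf B) := by
  rw [disjoint_left]
  intro f hA hB
  have : f ∈ commonFacets bricksOf A B := by
    simp only [commonFacets, intFacets, mem_filter, mem_univ, true_and] at hA hB ⊢
    exact ⟨hA.1, hB.1⟩
  simp [h] at this

theorem stmt8_general {Brick Facet : Type} [Fintype Brick] [DecidableEq Brick]
    [Fintype Facet] [DecidableEq Facet]
    (ω : Facet → ℝ)
    (bricksOf : Facet → Finset Brick)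
    (hBC : ∀ f, (bricksOf f).card = 1 ∨ (bricksOf f).card = 2)
    {N : ℕ} (O : Fin N ≃ Brick) (i : Fin N) (hi : (i : ℕ) + 1 < N)
    (O' : Fin N ≃ Brick) (hO' : O' = (Equiv.swap i ⟨(i : ℕ) + 1, hi⟩).trans O)
    (hshortA : ShortMove ω (intFacets bricksOf (O i)) (levelSurf bricksOf O ((i : ℕ) + 1)))
    (hshortB : ShortMove ω (intFacets bricksOf (O ⟨(i : ℕ) + 1, hi⟩))
      (levelSurf bricksOf O ((i : ℕ) + 1)))
    (hdisj : commonFacets bricksOf (O i) (O ⟨(i : ℕ) + 1, hi⟩) = ∅) :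
    WidthLE (widthList N (Lam ω bricksOf O')) (widthList N (Lam ω bricksOf O)) := by
  subst hO'
  have hS := levelSurf_succ bricksOf hBC O i
  have hσB := strength_symmDiff_of_disjoint ω (disjoint_intFacets hdisj) (levelSurf bricksOf O i)
  have hσA := hshortA.2
  rw [hS, strength_symmDiff_self] at hσA
  have hB := hshortB.2
  rw [hS, hσB] at hB
  have hΛ₁ := Lam_succ ω bricksOf hBC O i
  have hΛ₂ : Lam ω bricksOf O (i + 2) = Lam ω bricksOf O (i + 1) + strength ω
      (intFacets bricksOf (O ⟨i + 1, hi⟩)) (levelSurf bricksOf O (i + 1)) :=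
    Lam_succ ω bricksOf hBC O ⟨i + 1, hi⟩
  rw [hS, hσB] at hΛ₂
  have hΛ' := Lam_succ ω bricksOf hBC ((Equiv.swap i ⟨i + 1, hi⟩).trans O) i
  rw [Equiv.trans_apply, Equiv.swap_apply_left, levelSurf_swap_trans bricksOf O i hi (by omega),
    Lam_swap_trans ω bricksOf O i hi (j := i) (by omega)] at hΛ'
  exact IsSwapProfile.widthLE ⟨hi, fun k hk => Lam_swap_trans ω bricksOf O i hi hk,
    by linarith, by linarith, by linarith⟩

/-- if A = O⁻¹(i) and B = O⁻¹(i+1) are both shortening moves for the level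
surface S_i which share no facets, then swapping them does not increase width. -/
theorem stmt8 {Brick Facet : Type} [Fintype Brick] [DecidableEq Brick]
    [Fintype Facet] [DecidableEq Facet]
    (ω : Facet → ℝ) (hω : ∀ f, 0 ≤ ω f)
    (bricksOf : Facet → Finset Brick)
    (hBC : ∀ f, (bricksOf f).card = 1 ∨ (bricksOf f).card = 2)
    {N : ℕ} (O : Fin N ≃ Brick) (i : Fin N) (hi : (i : ℕ) + 1 < N)
    (O' : Fin N ≃ Brick) (hO' : O' = (Equiv.swap i ⟨(i : ℕ) + 1, hi⟩).trans O)
    (hshortA : ShortMove ω (intFacets bricksOf (O i)) (levelSurf bricksOf O ((i : ℕ) + 1)))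
    (hshortB : ShortMove ω (intFacets bricksOf (O ⟨(i : ℕ) + 1, hi⟩))
      (levelSurf bricksOf O ((i : ℕ) + 1)))
    (hdisj : commonFacets bricksOf (O i) (O ⟨(i : ℕ) + 1, hi⟩) = ∅) :
    WidthLE (widthList N (Lam ω bricksOf O')) (widthList N (Lam ω bricksOf O)) :=
  stmt8_general ω bricksOf hBC O i hi O' hO' hshortA hshortB hdisj
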